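/- arXiv:1506.01639 — 2 statements merged into one kernel-verified Lean document; each statement's English description precedes it below -/
import Mathlib

section
/- A 4×4 matrix M (viewed on ℂ²⊗ℂ²) is a Kronecker product A⊗B of 2×2 matrices if and only if its 'realignment' (the 4×4 matrix whose rows are the vectorized 2×2 blocks of M) has rank at most 1. -/
open Matrix Kronecker

/-- The realignment of a 4×4 matrix `M` on `ℂ²⊗ℂ²`: the matrix whose row indexed by
`(i,j)` is the row-vectorization of the 2×2 block `M_{ij}`. -/
def realign (M : Matrix (Fin 2 × Fin 2) (Fin 2 × Fin 2) ℂ) :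
    Matrix (Fin 2 × Fin 2) (Fin 2 × Fin 2) ℂ :=
  Matrix.of fun p q => M (p.1, q.1) (p.2, q.2)

/-- A matrix has rank at most one iff it is an outer product. -/
lemma rank_le_one_iff_outer {m n : Type*} [Fintype m] [Fintype n] [DecidableEq n]
    (N : Matrix m n ℂ) :
    N.rank ≤ 1 ↔ ∃ (u : m → ℂ) (v : n → ℂ), ∀ i j, N i j = u i * v j := by
  constructor
  · intro h
    rw [Matrix.rank, finrank_le_one_iff] at h
    obtain ⟨v₀, hv₀⟩ := h
    refine ⟨(v₀ : m → ℂ), fun j => ?_, fun i j => ?_⟩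
    · exact Classical.choose (hv₀ ⟨N.mulVec (Pi.single j 1),
        LinearMap.mem_range.2 ⟨Pi.single j 1, rfl⟩⟩)
    · have hc := Classical.choose_spec (hv₀ ⟨N.mulVec (Pi.single j 1),
        LinearMap.mem_range.2 ⟨Pi.single j 1, rfl⟩⟩)
      have : (Classical.choose (hv₀ ⟨N.mulVec (Pi.single j 1),
          LinearMap.mem_range.2 ⟨Pi.single j 1, rfl⟩⟩)) • (v₀ : m → ℂ)
          = N.mulVec (Pi.single j 1) := congrArg Subtype.val hc
      have h2 := congrFun this i
      simp only [Pi.smul_apply, smul_eq_mul] at h2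
      simp only [Matrix.mulVec, dotProduct, Pi.single_apply, mul_ite, mul_one,
        mul_zero, Finset.sum_ite_eq', Finset.mem_univ, if_true] at h2
      simpa [mul_comm] using h2.symm
  · rintro ⟨u, v, huv⟩
    have hrange : LinearMap.range N.mulVecLin ≤ Submodule.span ℂ {u} := by
      rintro w ⟨x, rfl⟩
      have : N.mulVecLin x = (∑ j, v j * x j) • u := by
        funext i
        simp [Matrix.mulVecLin_apply, Matrix.mulVec, dotProduct, huv,
          Finset.mul_sum, mul_assoc, mul_comm, mul_left_comm]
      rw [this]
      exact Submodule.smul_mem _ _ (Submodule.mem_span_singleton_self u)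
    calc N.rank ≤ Module.finrank ℂ (Submodule.span ℂ ({u} : Set (m → ℂ))) :=
          Submodule.finrank_mono hrange
      _ ≤ 1 := by
          simpa using finrank_span_le_card ({u} : Set (m → ℂ))
  
/-- `M` is a Kronecker product `A ⊗ B` of 2×2 matrices if and only if its
realignment has rank at most 1. -/
theorem kron_iff_realign_rank_le_one
    (M : Matrix (Fin 2 × Fin 2) (Fin 2 × Fin 2) ℂ) :
    (∃ A B : Matrix (Fin 2) (Fin 2) ℂ, M = A ⊗ₖ B) ↔ (realign M).rank ≤ 1 := by
  rw [rank_le_one_iff_outer]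
  constructor
  · rintro ⟨A, B, rfl⟩
    exact ⟨fun p => A p.1 p.2, fun q => B q.1 q.2, fun i j => rfl⟩
  · rintro ⟨u, v, huv⟩
    refine ⟨Matrix.of fun i k => u (i, k), Matrix.of fun j l => v (j, l), ?_⟩
    ext ⟨i, j⟩ ⟨k, l⟩
    have := huv (i, k) (j, l)
    simpa [realign, Matrix.kroneckerMap_apply] using this
end

section
/- For the scattering matrix S, the subalgebra {X ∈ M₂(ℂ)⊗M₂(ℂ) : S†(I⊗A)S = X for some A with X a product B⊗C} consists only of scalar multiples of the identity; hence the dimension of the 'patch' D = {S†(I⊗A)S : A ∈ M₂(ℂ)} ∩ {B⊗C products that are of the form I⊗C} is strictly less than 4. -/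
/-!
`S` is unitary, so `Sᴴ (1 ⊗ A) S = 1 ⊗ C` is the intertwining relation
`(1 ⊗ A) S = S (1 ⊗ C)`. Reading off four of its entries forces `C` to be scalar: the columns
of `S` at `|00⟩` and `|11⟩` are basis vectors, which kills the off-diagonal entries of `C`,
while the block of `S` mixing `|01⟩` and `|10⟩` gives `C₀₀ = A₁₁ = C₁₁`.
Hence `D` is the line of scalar matrices.
-/

open Complex Matrix Kronecker

/-- Index of the pair `(i,j)` of qubit basis labels in the computational basis
`{|00⟩,|01⟩,|10⟩,|11⟩}` of `ℂ²⊗ℂ²`. -/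
def idx (p : Fin 2 × Fin 2) : Fin 4 := ⟨2 * p.1.1 + p.2.1, by omega⟩

/-- The scattering matrix `S`, acting on `ℂ²⊗ℂ²`. -/
noncomputable def S : Matrix (Fin 2 × Fin 2) (Fin 2 × Fin 2) ℂ :=
  Matrix.of fun p q =>
    (!![1, 0, 0, 0;
       0, 1 / Real.sqrt 2, Complex.I / Real.sqrt 2, 0;
       0, Complex.I / Real.sqrt 2, 1 / Real.sqrt 2, 0;
       0, 0, 0, Complex.I] : Matrix (Fin 4) (Fin 4) ℂ) (idx p) (idx q)

/-- The "patch" `D`: matrices of the form `S†(I⊗A)S` that are also of the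
product form `I⊗C`. -/
noncomputable def patchD : Set (Matrix (Fin 2 × Fin 2) (Fin 2 × Fin 2) ℂ) :=
  {X | (∃ A : Matrix (Fin 2) (Fin 2) ℂ,
          X = Sᴴ * ((1 : Matrix (Fin 2) (Fin 2) ℂ) ⊗ₖ A) * S) ∧
       (∃ C : Matrix (Fin 2) (Fin 2) ℂ,
          X = (1 : Matrix (Fin 2) (Fin 2) ℂ) ⊗ₖ C)}

theorem mul_eq_mul_of_star_mul_mul_eq {R : Type*} [Monoid R] [StarMul R] {U M N : R}
    (hU : U ∈ unitary R) (h : star U * M * U = N) : M * U = U * N := by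
  rw [← h, ← mul_assoc, ← mul_assoc, Unitary.mul_star_self_of_mem hU, one_mul]

theorem finrank_span_range_smul {K V : Type*} [DivisionRing K] [AddCommGroup V] [Module K V]
    {x : V} (hx : x ≠ 0) :
    Module.finrank K (Submodule.span K (Set.range (· • x : K → V))) = 1 := by
  rw [← Submodule.span_singleton_eq_range, Submodule.span_eq, finrank_span_singleton hx]

theorem S_mem_unitaryGroup : S ∈ Matrix.unitaryGroup (Fin 2 × Fin 2) ℂ := by
  have h2 : (Real.sqrt 2 : ℂ) ^ 2 = 2 := by
    rw [← Complex.ofReal_pow, Real.sq_sqrt zero_le_two, Complex.ofReal_ofNat]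
  rw [Matrix.mem_unitaryGroup_iff', Matrix.star_eq_conjTranspose]
  ext ⟨i, j⟩ ⟨k, l⟩
  fin_cases i <;> fin_cases j <;> fin_cases k <;> fin_cases l <;>
    simp [Matrix.mul_apply, Fintype.sum_prod_type, S, idx, div_mul_div_comm, ← sq, h2] <;> ring

theorem exists_eq_smul_one_of_one_kronecker_mul_S_eq {A C : Matrix (Fin 2) (Fin 2) ℂ}
    (h : ((1 : Matrix (Fin 2) (Fin 2) ℂ) ⊗ₖ A) * S =
      S * ((1 : Matrix (Fin 2) (Fin 2) ℂ) ⊗ₖ C)) :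
    ∃ c : ℂ, C = c • 1 := by
  have entry p q := congrFun (congrFun h p) q
  have hC01 := entry (0, 1) (1, 1)
  have hC10 := entry (1, 0) (0, 0)
  have e11 := entry (0, 1) (0, 1)
  have e00 := entry (0, 1) (1, 0)
  simp only [mul_apply, Fintype.sum_prod_type, kroneckerMap_apply] at hC01 hC10 e11 e00
  simp [S, idx, Matrix.one_apply] at hC01 hC10 e11 e00
  have hC11 : C 1 1 = A 1 1 := mul_left_cancel₀ (by simp) (e11.symm.trans (mul_comm _ _))
  have hC00 : C 0 0 = A 1 1 := mul_left_cancel₀ (by simp) (e00.symm.trans (mul_comm _ _))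
  refine ⟨C 0 0, ?_⟩
  ext i j
  fin_cases i <;> fin_cases j <;> simp [hC01, hC10, hC11, hC00]

theorem smul_one_mem_patchD (c : ℂ) :
    c • (1 : Matrix (Fin 2 × Fin 2) (Fin 2 × Fin 2) ℂ) ∈ patchD := by
  have hc : c • (1 : Matrix (Fin 2 × Fin 2) (Fin 2 × Fin 2) ℂ)
      = (1 : Matrix (Fin 2) (Fin 2) ℂ) ⊗ₖ (c • 1) := by
    rw [Matrix.kronecker_smul, Matrix.one_kronecker_one]
  refine ⟨⟨c • 1, ?_⟩, ⟨c • 1, hc⟩⟩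
  rw [← hc, Matrix.mul_smul, Matrix.mul_one, Matrix.smul_mul,
    ← Matrix.star_eq_conjTranspose, Unitary.star_mul_self_of_mem S_mem_unitaryGroup]

theorem patchD_eq_range_smul_one :
    patchD = Set.range fun c : ℂ => c • (1 : Matrix (Fin 2 × Fin 2) (Fin 2 × Fin 2) ℂ) := by
  refine subset_antisymm ?_ (Set.range_subset_iff.2 smul_one_mem_patchD)
  rintro X ⟨⟨A, hA⟩, ⟨C, rfl⟩⟩
  obtain ⟨c, rfl⟩ := exists_eq_smul_one_of_one_kronecker_mul_S_eq
    (mul_eq_mul_of_star_mul_mul_eq S_mem_unitaryGroup hA.symm)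
  exact ⟨c, by rw [Matrix.kronecker_smul, Matrix.one_kronecker_one]⟩

/-- The patch `D` consists only of scalar multiples of the identity, hence its
dimension is strictly less than `4 = dim M₂(ℂ)`. -/
theorem patchD_eq_scalars :
    patchD = Set.range (fun c : ℂ =>
      c • (1 : Matrix (Fin 2 × Fin 2) (Fin 2 × Fin 2) ℂ)) ∧
    Module.finrank ℂ (Submodule.span ℂ patchD) < 4 := by
  refine ⟨patchD_eq_range_smul_one, ?_⟩
  rw [patchD_eq_range_smul_one, finrank_span_range_smul one_ne_zero]
  norm_num
end
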